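/- The group presented by ⟨ x₁,x₂,x₃,x₄ ∣ [x₁,x₂], [x₃,x₄], x₃x₂x₄x₁x₃⁻¹x₂⁻¹x₄⁻¹x₁⁻¹ ⟩ is not isomorphic to the group presented by ⟨ x₁,x₂,x₃,x₄ ∣ [x₁,x₂], [x₃,x₄], [x₂,x₄] ⟩. -/

import Mathlib

/-!
A homomorphism out of a presented group is an assignment of the generators satisfying the
relators, so isomorphic presented groups admit equally many homomorphisms to any finite group.
Into `S₃ = DihedralGroup 3` the first presentation admits 222 of them and the second 228,
which a finite enumeration over the `6 ^ 4` assignments confirms.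
-/

/-- relators of `π₁(M_{Γ₁})` -/
def relsGamma1 : Set (FreeGroup (Fin 4)) :=
  {FreeGroup.of 0 * FreeGroup.of 1 * (FreeGroup.of 0)⁻¹ * (FreeGroup.of 1)⁻¹,
   FreeGroup.of 2 * FreeGroup.of 3 * (FreeGroup.of 2)⁻¹ * (FreeGroup.of 3)⁻¹,
   FreeGroup.of 2 * FreeGroup.of 1 * FreeGroup.of 3 * FreeGroup.of 0 *
     (FreeGroup.of 2)⁻¹ * (FreeGroup.of 1)⁻¹ * (FreeGroup.of 3)⁻¹ *
     (FreeGroup.of 0)⁻¹}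

/-- relators of `π₁(M_{Γ₃})` -/
def relsGamma3 : Set (FreeGroup (Fin 4)) :=
  {FreeGroup.of 0 * FreeGroup.of 1 * (FreeGroup.of 0)⁻¹ * (FreeGroup.of 1)⁻¹,
   FreeGroup.of 2 * FreeGroup.of 3 * (FreeGroup.of 2)⁻¹ * (FreeGroup.of 3)⁻¹,
   FreeGroup.of 1 * FreeGroup.of 3 * (FreeGroup.of 1)⁻¹ * (FreeGroup.of 3)⁻¹}

namespace PresentedGroup

theorem mk_eq_one_of_mem {α : Type*} {rels : Set (FreeGroup α)} {r : FreeGroup α}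
    (hr : r ∈ rels) : mk rels r = 1 :=
  (QuotientGroup.eq_one_iff r).2 (Subgroup.subset_normalClosure hr)

def homEquiv {α : Type*} (rels : Set (FreeGroup α)) (G : Type*) [Group G] :
    (PresentedGroup rels →* G) ≃ {f : α → G // ∀ r ∈ rels, FreeGroup.lift f r = 1} where
  toFun φ := ⟨fun i ↦ φ (of i), fun r hr ↦ by
    have hlift : FreeGroup.lift (fun i ↦ φ (of i)) = φ.comp (mk rels) := by
      ext; simp [of]
    rw [hlift, MonoidHom.comp_apply, mk_eq_one_of_mem hr, map_one]⟩
  invFun f := toGroup f.2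
  left_inv φ := ext fun _ ↦ toGroup.of _
  right_inv f := Subtype.ext <| funext fun _ ↦ toGroup.of f.2

end PresentedGroup

section

variable {G : Type*} [Group G] (f : Fin 4 → G)

theorem lift_relsGamma1_iff :
    (∀ r ∈ relsGamma1, FreeGroup.lift f r = 1) ↔
      f 0 * f 1 = f 1 * f 0 ∧ f 2 * f 3 = f 3 * f 2 ∧
        f 2 * f 1 * f 3 * f 0 = f 0 * f 3 * f 1 * f 2 := by
  simp only [relsGamma1, Set.mem_insert_iff, Set.mem_singleton_iff, forall_eq_or_imp, forall_eq,
    map_mul, map_inv, FreeGroup.lift_apply_of, mul_inv_eq_iff_eq_mul, one_mul]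

theorem lift_relsGamma3_iff :
    (∀ r ∈ relsGamma3, FreeGroup.lift f r = 1) ↔
      f 0 * f 1 = f 1 * f 0 ∧ f 2 * f 3 = f 3 * f 2 ∧ f 1 * f 3 = f 3 * f 1 := by
  simp only [relsGamma3, Set.mem_insert_iff, Set.mem_singleton_iff, forall_eq_or_imp, forall_eq,
    map_mul, map_inv, FreeGroup.lift_apply_of, mul_inv_eq_iff_eq_mul, one_mul]

end

set_option maxRecDepth 100000 in
theorem card_hom_relsGamma1_dihedralGroup_three :
    Nat.card (PresentedGroup relsGamma1 →* DihedralGroup 3) = 222 := by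
  rw [Nat.card_congr <| (PresentedGroup.homEquiv _ _).trans
    (Equiv.subtypeEquivRight lift_relsGamma1_iff), Nat.card_eq_fintype_card]
  decide

set_option maxRecDepth 100000 in
theorem card_hom_relsGamma3_dihedralGroup_three :
    Nat.card (PresentedGroup relsGamma3 →* DihedralGroup 3) = 228 := by
  rw [Nat.card_congr <| (PresentedGroup.homEquiv _ _).trans
    (Equiv.subtypeEquivRight lift_relsGamma3_iff), Nat.card_eq_fintype_card]
  decide

theorem presented_groups_not_isomorphic :
    IsEmpty (PresentedGroup relsGamma1 ≃* PresentedGroup relsGamma3) := by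
  refine ⟨fun e ↦ ?_⟩
  have hcard := Nat.card_congr (e.monoidHomCongrLeftEquiv (N := DihedralGroup 3))
  rw [card_hom_relsGamma1_dihedralGroup_three, card_hom_relsGamma3_dihedralGroup_three] at hcard
  exact absurd hcard (by decide)
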